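/- Let G be a connected graph with adjacency matrix A, eigenvalues μ₁ ≥ μ₂ ≥ ... ≥ μₙ with μ₂ > 0, and let g be the multiplicity of the smallest eigenvalue μₙ. Then χ_q(G) ≥ 1 + min{g, |μₙ|/μ₂}. -/

import Mathlib

open Matrix BigOperators

lemma sum_ctms_eq_zero {m : ℕ} {ι : Type*} (s : Finset ι)
    (B : ι → Matrix (Fin m) (Fin m) ℂ)
    (h : ∑ j ∈ s, (B j)ᴴ * B j = 0) : ∀ j ∈ s, B j = 0 := by
  have key : ∀ a : Fin m, ∑ j ∈ s, ∑ i, Complex.normSq (B j i a) = 0 := by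
    intro a
    have h1 : ∑ j ∈ s, ((B j)ᴴ * B j) a a = 0 := by
      have := congrArg (fun M : Matrix (Fin m) (Fin m) ℂ => M a a) h
      simpa [Matrix.sum_apply] using this
    have h2 : ∑ j ∈ s, ((B j)ᴴ * B j) a a
        = ((∑ j ∈ s, ∑ i, Complex.normSq (B j i a) : ℝ) : ℂ) := by
      push_cast
      refine Finset.sum_congr rfl fun j _ => ?_
      simp [Matrix.mul_apply, Matrix.conjTranspose_apply, Complex.normSq_eq_conj_mul_self]
    rw [h2] at h1
    exact_mod_cast h1
  intro j hj
  ext i a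
  have := key a
  rw [Finset.sum_eq_zero_iff_of_nonneg (fun j _ => Finset.sum_nonneg fun i _ => Complex.normSq_nonneg _)] at this
  have h3 := this j hj
  rw [Finset.sum_eq_zero_iff_of_nonneg (fun i _ => Complex.normSq_nonneg _)] at h3
  simpa [Complex.normSq_eq_zero] using h3 i (Finset.mem_univ i)

set_option maxHeartbeats 1000000 in
lemma proj_orth {d c : ℕ} (Q : Fin c → Matrix (Fin d) (Fin d) ℂ)
    (hH : ∀ k, (Q k)ᴴ = Q k) (hI : ∀ k, Q k * Q k = Q k) (hS : ∑ k, Q k = 1) :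
    ∀ k k', k ≠ k' → Q k * Q k' = 0 := by
  intro k k' hkk
  have key : ∑ j ∈ Finset.univ.erase k, (Q j * Q k)ᴴ * (Q j * Q k) = 0 := by
    have h1 : ∑ j, Q k * Q j * Q k = Q k := by
      rw [← Finset.sum_mul, ← Finset.mul_sum, hS, mul_one, hI]
    have h2 : ∑ j, Q k * Q j * Q k
        = Q k * Q k * Q k + ∑ j ∈ Finset.univ.erase k, Q k * Q j * Q k := by
      exact (Finset.add_sum_erase _ _ (Finset.mem_univ k)).symm
    have h3 : ∑ j ∈ Finset.univ.erase k, Q k * Q j * Q k = 0 := by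
      have := h1
      rw [h2, hI, hI] at this
      exact (add_eq_left).mp this
    rw [← h3]
    refine Finset.sum_congr rfl fun j _ => ?_
    rw [Matrix.conjTranspose_mul, hH, hH, Matrix.mul_assoc, ← Matrix.mul_assoc (Q j), hI,
      ← Matrix.mul_assoc]
  have h0 : Q k' * Q k = 0 :=
    sum_ctms_eq_zero _ _ key k' (Finset.mem_erase.2 ⟨Ne.symm hkk, Finset.mem_univ _⟩)
  calc Q k * Q k' = (Q k' * Q k)ᴴ := by rw [Matrix.conjTranspose_mul, hH, hH]
  _ = 0 := by rw [h0]; simp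

noncomputable section
open Complex

variable {n c d : ℕ}

def om (c : ℕ) : ℂ := Complex.exp (2 * Real.pi * Complex.I / c)

lemma om_ne_zero : om c ≠ 0 := Complex.exp_ne_zero _

lemma om_pow_c (hc : c ≠ 0) : (om c) ^ c = 1 := ((Complex.isPrimitiveRoot_exp c hc).pow_eq_one)

lemma om_conj : (starRingEnd ℂ) (om c) = (om c)⁻¹ := by
  rw [om, ← Complex.exp_conj, ← Complex.exp_neg]
  congr 1
  simp [map_div₀, Complex.conj_I, map_ofNat]
  ring

lemma om_conj_pow (m : ℕ) : (starRingEnd ℂ) ((om c) ^ m) = (om c) ^ (-(m : ℤ)) := by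
  rw [map_pow, om_conj, inv_pow, ← zpow_natCast (om c) m, ← _root_.zpow_neg]

lemma om_zpow_sum (hc : c ≠ 0) (k k' : Fin c) :
    ∑ j : Fin c, (om c) ^ (-((((j : ℕ) * (k : ℕ) : ℕ)) : ℤ))
        * (om c) ^ (((((j : ℕ) * (k' : ℕ) : ℕ)) : ℤ))
      = if k = k' then (c : ℂ) else 0 := by
  have hprim := Complex.isPrimitiveRoot_exp c hc
  set ζ : ℂ := (om c) ^ (((k' : ℕ) : ℤ) - ((k : ℕ) : ℤ)) with hζ
  have hz : ∀ j : Fin c, (om c) ^ (-((((j : ℕ) * (k : ℕ) : ℕ)) : ℤ))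
        * (om c) ^ (((((j : ℕ) * (k' : ℕ) : ℕ)) : ℤ)) = ζ ^ (j : ℕ) := by
    intro j
    rw [hζ, ← zpow_natCast ((om c) ^ (((k' : ℕ) : ℤ) - ((k : ℕ) : ℤ))) (j : ℕ),
      ← _root_.zpow_mul, ← zpow_add₀ om_ne_zero]
    congr 1
    push_cast
    ring
  simp_rw [hz]
  rcases eq_or_ne k k' with h | h
  · simp [hζ, h, Finset.card_univ]
  · rw [if_neg h]
    have hζc : ζ ^ c = 1 := by
      rw [hζ, ← zpow_natCast ((om c) ^ (((k' : ℕ) : ℤ) - ((k : ℕ) : ℤ))) c,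
        ← _root_.zpow_mul, mul_comm, _root_.zpow_mul, zpow_natCast, om_pow_c hc, _root_.one_zpow]
    have hζ1 : ζ ≠ 1 := by
      intro h1
      rw [hζ] at h1
      have h1' : (c : ℤ) ∣ (((k' : ℕ) : ℤ) - ((k : ℕ) : ℤ)) :=
        (hprim.zpow_eq_one_iff_dvd _).mp h1
      have hv : (k : ℕ) ≠ (k' : ℕ) := fun e => h (Fin.ext e)
      have hk := k.2; have hk' := k'.2
      rcases lt_or_gt_of_ne hv with hlt | hlt
      · have := Int.le_of_dvd (by omega) h1'; omega
      · have := Int.le_of_dvd (by omega) ((dvd_neg).mpr h1'); omega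
    rw [Fin.sum_univ_eq_sum_range (fun j => ζ ^ j) c, geom_sum_eq hζ1 c, hζc, sub_self, zero_div]

def Mm (P : Fin n → Fin c → Matrix (Fin d) (Fin d) ℂ) (j : Fin c) (v : Fin n) :
    Matrix (Fin d) (Fin d) ℂ :=
  ∑ k : Fin c, ((om c) ^ (((((j : ℕ) * (k : ℕ) : ℕ)) : ℤ))) • P v k

lemma sum_smul_mul (a b : Fin c → ℂ) (X Y : Fin c → Matrix (Fin d) (Fin d) ℂ) :
    (∑ k, a k • X k) * (∑ k, b k • Y k) = ∑ k, ∑ k', (a k * b k') • (X k * Y k') := by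
  rw [Finset.sum_mul]
  refine Finset.sum_congr rfl fun k _ => ?_
  rw [Finset.mul_sum]
  refine Finset.sum_congr rfl fun k' _ => ?_
  rw [Matrix.smul_mul, Matrix.mul_smul, smul_smul]

lemma Mm_conjTranspose (P : Fin n → Fin c → Matrix (Fin d) (Fin d) ℂ)
    (hH : ∀ v k, (P v k)ᴴ = P v k) (j : Fin c) (v : Fin n) :
    (Mm P j v)ᴴ = ∑ k : Fin c, ((om c) ^ (-((((j : ℕ) * (k : ℕ) : ℕ)) : ℤ))) • P v k := by
  rw [Mm, Matrix.conjTranspose_sum]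
  refine Finset.sum_congr rfl fun k _ => ?_
  rw [Matrix.conjTranspose_smul, hH, Complex.star_def, zpow_natCast, om_conj_pow]

lemma Mm_mul_expand (P : Fin n → Fin c → Matrix (Fin d) (Fin d) ℂ)
    (hH : ∀ v k, (P v k)ᴴ = P v k) (j : Fin c) (v w : Fin n) :
    (Mm P j v)ᴴ * (Mm P j w)
      = ∑ k : Fin c, ∑ k' : Fin c, ((om c) ^ (-((((j : ℕ) * (k : ℕ) : ℕ)) : ℤ))
          * (om c) ^ (((((j : ℕ) * (k' : ℕ) : ℕ)) : ℤ))) • (P v k * P w k') := by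
  rw [Mm_conjTranspose P hH, Mm, sum_smul_mul]

lemma Mm_mul_sum (hc : c ≠ 0) (P : Fin n → Fin c → Matrix (Fin d) (Fin d) ℂ)
    (hH : ∀ v k, (P v k)ᴴ = P v k) (v w : Fin n) :
    ∑ j : Fin c, (Mm P j v)ᴴ * (Mm P j w) = (c : ℂ) • ∑ k, P v k * P w k := by
  simp_rw [Mm_mul_expand P hH]
  rw [Finset.sum_comm]
  have swap2 : ∀ k : Fin c, ∑ j : Fin c, ∑ k' : Fin c,
        ((om c) ^ (-((((j : ℕ) * (k : ℕ) : ℕ)) : ℤ))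
          * (om c) ^ (((((j : ℕ) * (k' : ℕ) : ℕ)) : ℤ))) • (P v k * P w k')
      = ∑ k' : Fin c, (if k = k' then (c : ℂ) else 0) • (P v k * P w k') := by
    intro k
    rw [Finset.sum_comm]
    refine Finset.sum_congr rfl fun k' _ => ?_
    rw [← Finset.sum_smul, om_zpow_sum hc k k']
  simp_rw [swap2]
  rw [Finset.smul_sum]
  refine Finset.sum_congr rfl fun k _ => ?_
  simp

lemma Mm_unitary (hc : c ≠ 0) (P : Fin n → Fin c → Matrix (Fin d) (Fin d) ℂ)
    (hH : ∀ v k, (P v k)ᴴ = P v k) (hI : ∀ v k, P v k * P v k = P v k)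
    (hS : ∀ v, ∑ k, P v k = 1) (j : Fin c) (v : Fin n) :
    (Mm P j v)ᴴ * (Mm P j v) = 1 := by
  have horth := proj_orth (P v) (hH v) (hI v) (hS v)
  rw [Mm_mul_expand P hH]
  have diag : ∀ k : Fin c, ∑ k' : Fin c, ((om c) ^ (-((((j : ℕ) * (k : ℕ) : ℕ)) : ℤ))
          * (om c) ^ (((((j : ℕ) * (k' : ℕ) : ℕ)) : ℤ))) • (P v k * P v k') = P v k := by
    intro k
    rw [Finset.sum_eq_single k]
    · rw [hI, ← zpow_add₀ om_ne_zero]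
      simp
    · intro k' _ hkk
      rw [horth k k' (Ne.symm hkk), smul_zero]
    · intro h; exact absurd (Finset.mem_univ k) h
  simp_rw [diag]
  exact hS v

lemma Mm_zero (P : Fin n → Fin c → Matrix (Fin d) (Fin d) ℂ)
    (hS : ∀ v, ∑ k, P v k = 1) (h0 : (0:ℕ) < c) (v : Fin n) :
    Mm P ⟨0, h0⟩ v = 1 := by
  rw [Mm]
  have h1 : ∀ k : Fin c,
      ((om c) ^ ((((((⟨0, h0⟩ : Fin c) : ℕ) * (k : ℕ) : ℕ)) : ℤ))) • P v k = P v k := by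
    intro k
    norm_num
  simp_rw [h1]
  exact hS v

end
section
open Complex Matrix
variable {n c d : ℕ}

lemma trace_mul_expand (Ac : Matrix (Fin n) (Fin n) ℂ) (B : Matrix (Fin n) (Fin n) ℂ) :
    Matrix.trace (Ac * B) = ∑ v, ∑ w, Ac v w * B w v := by
  simp [Matrix.trace, Matrix.mul_apply]

lemma trace_form (Ac : Matrix (Fin n) (Fin n) ℂ) (X : Matrix (Fin n) (Fin d) ℂ) :
    Matrix.trace (Xᴴ * Ac * X)
      = ∑ v, ∑ w, Ac v w * ∑ l, (starRingEnd ℂ) (X v l) * X w l := by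
  rw [show Xᴴ * Ac * X = Xᴴ * (Ac * X) from Matrix.mul_assoc _ _ _, Matrix.trace_mul_comm,
    show Ac * X * Xᴴ = Ac * (X * Xᴴ) from Matrix.mul_assoc _ _ _, trace_mul_expand]
  refine Finset.sum_congr rfl fun v _ => Finset.sum_congr rfl fun w _ => ?_
  congr 1
  simp [Matrix.mul_apply, Matrix.conjTranspose_apply, Complex.star_def, mul_comm]

lemma trace_form_diag (δ : Fin n → ℂ) (C : Matrix (Fin n) (Fin d) ℂ) :
    Matrix.trace (Cᴴ * Matrix.diagonal δ * C)
      = ∑ i, δ i * ∑ l, (starRingEnd ℂ) (C i l) * C i l := by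
  rw [show Cᴴ * Matrix.diagonal δ * C = Cᴴ * (Matrix.diagonal δ * C) from Matrix.mul_assoc _ _ _,
    Matrix.trace_mul_comm,
    show Matrix.diagonal δ * C * Cᴴ = Matrix.diagonal δ * (C * Cᴴ) from Matrix.mul_assoc _ _ _,
    trace_mul_expand]
  refine Finset.sum_congr rfl fun i _ => ?_
  rw [Finset.sum_eq_single i]
  · rw [Matrix.diagonal_apply_eq]
    congr 1
    simp [Matrix.mul_apply, Matrix.conjTranspose_apply, Complex.star_def, mul_comm]
  · intro w _ hw; rw [Matrix.diagonal_apply_ne' _ hw, zero_mul]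
  · intro h; exact absurd (Finset.mem_univ i) h

lemma trace_normsq (X : Matrix (Fin n) (Fin d) ℂ) :
    Matrix.trace (Xᴴ * X) = ((∑ v, ∑ l, Complex.normSq (X v l) : ℝ) : ℂ) := by
  push_cast
  rw [Matrix.trace]
  rw [Finset.sum_comm]
  refine Finset.sum_congr rfl fun v _ => ?_
  simp [Matrix.diag, Matrix.mul_apply, Matrix.conjTranspose_apply,
    Complex.normSq_eq_conj_mul_self]

lemma inner_mulVec (M N : Matrix (Fin d) (Fin d) ℂ) (x y : Fin d → ℂ) :
    ∑ l, (starRingEnd ℂ) ((M.mulVec x) l) * ((N.mulVec y) l)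
      = dotProduct (star x) ((Mᴴ * N).mulVec y) := by
  have h : ∑ l, (starRingEnd ℂ) ((M.mulVec x) l) * ((N.mulVec y) l)
      = dotProduct (star (M.mulVec x)) (N.mulVec y) := by
    simp [dotProduct, Complex.star_def]
  rw [h, Matrix.star_mulVec, ← Matrix.dotProduct_mulVec, Matrix.mulVec_mulVec]
end
section
open Complex Matrix
variable {n c d : ℕ}

noncomputable def Tt (P : Fin n → Fin c → Matrix (Fin d) (Fin d) ℂ) (j : Fin c)
    (Z : Matrix (Fin n) (Fin d) ℂ) : Matrix (Fin n) (Fin d) ℂ :=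
  Matrix.of fun v l => ((Mm P j v).mulVec (fun a => Z v a)) l

/-- Pinching: the sum over all `j` of the quadratic forms vanishes. -/
lemma pinching (hc : c ≠ 0) (P : Fin n → Fin c → Matrix (Fin d) (Fin d) ℂ)
    (hH : ∀ v k, (P v k)ᴴ = P v k)
    (Ac : Matrix (Fin n) (Fin n) ℂ)
    (hAc4 : ∀ v w, Ac v w ≠ 0 → ∑ k, P v k * P w k = 0)
    (Z : Matrix (Fin n) (Fin d) ℂ) :
    ∑ j : Fin c, Matrix.trace ((Tt P j Z)ᴴ * Ac * (Tt P j Z)) = 0 := by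
  simp_rw [trace_form]
  rw [Finset.sum_comm]
  refine Finset.sum_eq_zero fun v _ => ?_
  rw [Finset.sum_comm]
  refine Finset.sum_eq_zero fun w _ => ?_
  rcases eq_or_ne (Ac v w) 0 with h | h
  · simp [h]
  · rw [← Finset.mul_sum]
    have hinner : ∀ j : Fin c, ∑ l, (starRingEnd ℂ) (Tt P j Z v l) * Tt P j Z w l
        = dotProduct (star (fun a => Z v a))
            (((Mm P j v)ᴴ * (Mm P j w)).mulVec (fun a => Z w a)) := by
      intro j
      have := inner_mulVec (Mm P j v) (Mm P j w) (fun a => Z v a) (fun a => Z w a)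
      simpa [Tt] using this
    simp_rw [hinner]
    have hsum : ∑ j : Fin c, ((Mm P j v)ᴴ * (Mm P j w)) = 0 := by
      rw [Mm_mul_sum hc P hH v w, hAc4 v w h, smul_zero]
    have hz : ∑ j : Fin c, dotProduct (star (fun a => Z v a))
        (((Mm P j v)ᴴ * (Mm P j w)).mulVec (fun a => Z w a)) = 0 := by
      simp only [dotProduct]
      rw [Finset.sum_comm]
      refine Finset.sum_eq_zero fun p _ => ?_
      rw [← Finset.mul_sum]
      have hzz : ∑ j : Fin c, (((Mm P j v)ᴴ * Mm P j w) *ᵥ fun a => Z w a) p = 0 := by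
        have h2 : ∀ j : Fin c, (((Mm P j v)ᴴ * Mm P j w) *ᵥ fun a => Z w a) p
            = ∑ q, ((Mm P j v)ᴴ * Mm P j w) p q * Z w q := fun j => rfl
        simp_rw [h2]
        rw [Finset.sum_comm]
        refine Finset.sum_eq_zero fun q _ => ?_
        rw [← Finset.sum_mul]
        have hent : ∑ j : Fin c, ((Mm P j v)ᴴ * Mm P j w) p q = 0 := by
          have := congrArg (fun M : Matrix (Fin d) (Fin d) ℂ => M p q) hsum
          simpa [Matrix.sum_apply] using this
        rw [hent, zero_mul]
      rw [hzz, mul_zero]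
    rw [hz, mul_zero]

/-- Norm preservation under `Tt`. -/
lemma Tt_norm (hc : c ≠ 0) (P : Fin n → Fin c → Matrix (Fin d) (Fin d) ℂ)
    (hH : ∀ v k, (P v k)ᴴ = P v k) (hI : ∀ v k, P v k * P v k = P v k)
    (hS : ∀ v, ∑ k, P v k = 1) (j : Fin c) (Z : Matrix (Fin n) (Fin d) ℂ) :
    Matrix.trace ((Tt P j Z)ᴴ * (Tt P j Z)) = Matrix.trace (Zᴴ * Z) := by
  rw [trace_normsq, trace_normsq]
  norm_cast
  refine Finset.sum_congr rfl fun v _ => ?_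
  have expand : ∑ l, Complex.normSq (Tt P j Z v l)
      = (∑ l, ((Complex.normSq (Tt P j Z v l) : ℝ) : ℂ)).re := by
    push_cast; rw [Complex.re_sum]; simp
  rw [expand]
  have h1 : ∑ l, ((Complex.normSq (Tt P j Z v l) : ℝ) : ℂ)
      = ∑ l, (starRingEnd ℂ) (Tt P j Z v l) * Tt P j Z v l := by
    refine Finset.sum_congr rfl fun l _ => ?_
    rw [Complex.normSq_eq_conj_mul_self]
  rw [h1]
  have h2 : ∑ l, (starRingEnd ℂ) (Tt P j Z v l) * Tt P j Z v l
      = dotProduct (star (fun a => Z v a))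
          (((Mm P j v)ᴴ * (Mm P j v)).mulVec (fun a => Z v a)) := by
    have := inner_mulVec (Mm P j v) (Mm P j v) (fun a => Z v a) (fun a => Z v a)
    simpa [Tt] using this
  rw [h2, Mm_unitary hc P hH hI hS j v, Matrix.one_mulVec]
  have h3 : dotProduct (star (fun a => Z v a)) (fun a => Z v a)
      = ∑ l, ((Complex.normSq (Z v l) : ℝ) : ℂ) := by
    simp [dotProduct, Complex.normSq_eq_conj_mul_self, Complex.star_def]
  rw [h3]
  push_cast
  rw [Complex.re_sum]
  simp
end
section
open Matrix

lemma exists_ker_vec {α β : Type*} [Fintype α] [Fintype β] [DecidableEq β]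
    (K : Matrix α β ℂ) (hlt : Fintype.card α < Fintype.card β) :
    ∃ γ : β → ℂ, γ ≠ 0 ∧ K.mulVec γ = 0 := by
  by_contra hcon
  push_neg at hcon
  have hker : ∀ γ : β → ℂ, K.mulVecLin γ = 0 → γ = 0 := by
    intro γ hγ
    by_contra hne
    exact (hcon γ hne) hγ
  have hinj : Function.Injective K.mulVecLin :=
    LinearMap.ker_eq_bot.mp (LinearMap.ker_eq_bot'.mpr hker)
  have := LinearMap.finrank_le_finrank_of_injective hinj
  rw [Module.finrank_fintype_fun_eq_card, Module.finrank_fintype_fun_eq_card] at this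
  omega
end
section
open Matrix Complex

set_option maxHeartbeats 1000000 in
lemma core {n c d : ℕ} (hc : c ≠ 0) (hd : 0 < d)
    (P : Fin n → Fin c → Matrix (Fin d) (Fin d) ℂ)
    (hH : ∀ v k, (P v k)ᴴ = P v k) (hI : ∀ v k, P v k * P v k = P v k)
    (hS : ∀ v, ∑ k, P v k = 1)
    (Ac : Matrix (Fin n) (Fin n) ℂ)
    (hAc4 : ∀ v w, Ac v w ≠ 0 → ∑ k, P v k * P w k = 0)
    (Uc : Matrix (Fin n) (Fin n) ℂ) (hUc1 : Uc * Ucᴴ = 1) (hUc2 : Ucᴴ * Uc = 1)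
    (e : Fin n → ℝ)
    (hAdec : Ac = Ucᴴ * Matrix.diagonal (fun i => (e i : ℂ)) * Uc)
    (i0 : Fin n) (t mv : ℝ) (ht : ∀ i, i ≠ i0 → e i ≤ t)
    (Sg : Finset (Fin n)) (hSg : ∀ i ∈ Sg, e i = mv)
    (hcard : c ≤ Sg.card) :
    -mv ≤ ((c : ℝ) - 1) * t := by
  classical
  have hc0 : 0 < c := Nat.pos_of_ne_zero hc
  set j0 : Fin c := ⟨0, hc0⟩ with hj0
  -- the constraint matrix
  set K : Matrix ({j : Fin c // j ≠ j0} × Fin d) ((↥Sg) × Fin d) ℂ :=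
    Matrix.of (fun jl pa => ∑ v, Uc i0 v * Mm P jl.1.1 v jl.2 pa.2 * Ucᴴ v pa.1.1) with hK
  have hltcard : Fintype.card ({j : Fin c // j ≠ j0} × Fin d)
      < Fintype.card ((↥Sg) × Fin d) := by
    rw [Fintype.card_prod, Fintype.card_prod, Fintype.card_coe, Fintype.card_fin]
    have h1 : Fintype.card {j : Fin c // j ≠ j0} = c - 1 := by
      rw [Fintype.card_subtype_compl, Fintype.card_fin, Fintype.card_subtype_eq]
    rw [h1]
    have : c - 1 < Sg.card := by omega
    exact Nat.mul_lt_mul_of_lt_of_le this (le_refl d) hd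
  obtain ⟨γ, hγne, hγ0⟩ := exists_ker_vec K hltcard
  set Γ : Matrix (Fin n) (Fin d) ℂ :=
    Matrix.of (fun i a => if h : i ∈ Sg then γ (⟨i, h⟩, a) else 0) with hΓ
  set Z : Matrix (Fin n) (Fin d) ℂ := Ucᴴ * Γ with hZdef
  have hUZ : Uc * Z = Γ := by rw [hZdef, ← Matrix.mul_assoc, hUc1, Matrix.one_mul]
  -- real quadratic forms
  set Ry : Matrix (Fin n) (Fin d) ℂ → ℝ :=
    fun C => ∑ i, e i * ∑ l, Complex.normSq (C i l) with hRy
  set Nr : Matrix (Fin n) (Fin d) ℂ → ℝ :=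
    fun C => ∑ v, ∑ l, Complex.normSq (C v l) with hNr
  -- trace identities
  have hQ : ∀ X : Matrix (Fin n) (Fin d) ℂ,
      Matrix.trace (Xᴴ * Ac * X) = ((Ry (Uc * X) : ℝ) : ℂ) := by
    intro X
    have h1 : Xᴴ * Ac * X
        = (Uc * X)ᴴ * Matrix.diagonal (fun i => (e i : ℂ)) * (Uc * X) := by
      rw [hAdec, Matrix.conjTranspose_mul]
      simp only [Matrix.mul_assoc]
    rw [h1, trace_form_diag, hRy]
    push_cast
    refine Finset.sum_congr rfl fun i _ => ?_
    congr 1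
    refine Finset.sum_congr rfl fun l _ => ?_
    rw [Complex.normSq_eq_conj_mul_self]
  have hNtr : ∀ X : Matrix (Fin n) (Fin d) ℂ,
      Matrix.trace (Xᴴ * X) = ((Nr X : ℝ) : ℂ) := fun X => trace_normsq X
  have hNU : ∀ X : Matrix (Fin n) (Fin d) ℂ, Nr (Uc * X) = Nr X := by
    intro X
    have h1 : (Uc * X)ᴴ * (Uc * X) = Xᴴ * X := by
      rw [Matrix.conjTranspose_mul, Matrix.mul_assoc, ← Matrix.mul_assoc Ucᴴ, hUc2,
        Matrix.one_mul]
    have := congrArg Matrix.trace h1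
    rw [hNtr, hNtr] at this
    exact_mod_cast this
  have hNT : ∀ j : Fin c, Nr (Tt P j Z) = Nr Z := by
    intro j
    have := Tt_norm hc P hH hI hS j Z
    rw [hNtr, hNtr] at this
    exact_mod_cast this
  have hNΓ : Nr Z = Nr Γ := by rw [← hUZ, hNU]
  -- real pinching
  have hRsum : ∑ j : Fin c, Ry (Uc * Tt P j Z) = 0 := by
    have := pinching hc P hH Ac hAc4 Z
    simp_rw [hQ] at this
    exact_mod_cast this
  -- T at j0 is identity
  have hT0 : Tt P j0 Z = Z := by
    ext v l
    show ((Mm P j0 v).mulVec (fun a => Z v a)) l = Z v l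
    rw [hj0, Mm_zero P hS hc0 v, Matrix.one_mulVec]
  -- value at j0
  have hRyΓ : Ry Γ = mv * Nr Γ := by
    rw [hRy, hNr, Finset.mul_sum]
    refine Finset.sum_congr rfl fun i _ => ?_
    by_cases hi : i ∈ Sg
    · rw [hSg i hi]
    · have hz : ∀ l, Γ i l = 0 := fun l => by simp [hΓ, hi]
      simp [hz]
  -- positivity
  have hNpos : 0 < Nr Γ := by
    obtain ⟨pa, hpa⟩ := Function.ne_iff.mp hγne
    have hΓpa : Γ pa.1.1 pa.2 = γ pa := by
      simp only [hΓ, Matrix.of_apply]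
      rw [dif_pos pa.1.2]
    have h1 : 0 < ∑ l, Complex.normSq (Γ pa.1.1 l) := by
      refine Finset.sum_pos' (fun l _ => Complex.normSq_nonneg _) ⟨pa.2, Finset.mem_univ _, ?_⟩
      rw [hΓpa]
      exact Complex.normSq_pos.mpr hpa
    refine lt_of_lt_of_le h1 ?_
    exact Finset.single_le_sum (f := fun i => ∑ l, Complex.normSq (Γ i l))
      (fun i _ => Finset.sum_nonneg fun l _ => Complex.normSq_nonneg _) (Finset.mem_univ _)
  -- constraints
  have hconstr : ∀ (j : Fin c) (hj : j ≠ j0) (l : Fin d), (Uc * Tt P j Z) i0 l = 0 := by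
    intro j hj l
    have hmv : (K.mulVec γ) (⟨j, hj⟩, l) = 0 := by rw [hγ0]; rfl
    rw [← hmv]
    have hZva : ∀ v a, Z v a = ∑ p ∈ Sg.attach, Ucᴴ v p.1 * γ (p, a) := by
      intro v a
      have h1 : Z v a = ∑ i, Ucᴴ v i * Γ i a := by rw [hZdef]; rfl
      rw [h1]
      rw [← Finset.sum_subset (Finset.subset_univ Sg) (fun i _ hi => by simp [hΓ, hi])]
      rw [← Finset.sum_attach Sg (fun i => Ucᴴ v i * Γ i a)]
      refine Finset.sum_congr rfl fun p _ => ?_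
      congr 1
      simp only [hΓ, Matrix.of_apply]
      rw [dif_pos p.2]
    -- expand LHS
    have hL : (Uc * Tt P j Z) i0 l
        = ∑ v, ∑ a, Uc i0 v * Mm P j v l a * Z v a := by
      rw [Matrix.mul_apply]
      refine Finset.sum_congr rfl fun v _ => ?_
      have h2 : Tt P j Z v l = ∑ a, Mm P j v l a * Z v a := rfl
      rw [h2, Finset.mul_sum]
      refine Finset.sum_congr rfl fun a _ => by ring
    rw [hL]
    have hR : (K.mulVec γ) (⟨j, hj⟩, l)
        = ∑ p ∈ Sg.attach, ∑ a, (∑ v, Uc i0 v * Mm P j v l a * Ucᴴ v p.1) * γ (p, a) := by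
      show ∑ pa : (↥Sg × Fin d), K (⟨j, hj⟩, l) pa * γ pa = _
      rw [Fintype.sum_prod_type, Finset.univ_eq_attach]
      rfl
    rw [hR]
    have step1 : ∀ v : Fin n, ∑ a, Uc i0 v * Mm P j v l a * Z v a
        = ∑ p ∈ Sg.attach, ∑ a, Uc i0 v * Mm P j v l a * (Ucᴴ v p.1 * γ (p, a)) := by
      intro v
      simp_rw [hZva, Finset.mul_sum]
      exact Finset.sum_comm
    simp_rw [step1]
    rw [Finset.sum_comm]
    refine Finset.sum_congr rfl fun p _ => ?_
    rw [Finset.sum_comm]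
    refine Finset.sum_congr rfl fun a _ => ?_
    rw [Finset.sum_mul]
    exact Finset.sum_congr rfl fun v _ => by ring
  -- the bound for j ≠ j0
  have hbound : ∀ (j : Fin c), j ≠ j0 → Ry (Uc * Tt P j Z) ≤ t * Nr Γ := by
    intro j hj
    have hNC : Nr (Uc * Tt P j Z) = Nr Γ := by rw [hNU, hNT, hNΓ]
    have h1 : Ry (Uc * Tt P j Z) ≤ t * Nr (Uc * Tt P j Z) := by
      rw [hRy, hNr, Finset.mul_sum]
      refine Finset.sum_le_sum fun i _ => ?_
      by_cases hii : i = i0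
      · subst hii
        have hz : ∀ l, (Uc * Tt P j Z) i l = 0 := hconstr j hj
        simp [hz]
      · exact mul_le_mul_of_nonneg_right (ht i hii)
          (Finset.sum_nonneg fun l _ => Complex.normSq_nonneg _)
    rwa [hNC] at h1
  -- assemble
  have hsplit : Ry (Uc * Tt P j0 Z) + ∑ j ∈ Finset.univ.erase j0, Ry (Uc * Tt P j Z)
      = 0 :=
    (Finset.add_sum_erase Finset.univ (fun j => Ry (Uc * Tt P j Z))
      (Finset.mem_univ j0)).trans hRsum
  rw [hT0, hUZ, hRyΓ] at hsplit
  have hsum_le : ∑ j ∈ Finset.univ.erase j0, Ry (Uc * Tt P j Z)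
      ≤ ((c - 1 : ℕ) : ℝ) * (t * Nr Γ) := by
    have := Finset.sum_le_card_nsmul (Finset.univ.erase j0)
      (fun j => Ry (Uc * Tt P j Z)) (t * Nr Γ)
      (fun j hjmem => hbound j (Finset.ne_of_mem_erase hjmem))
    rw [Finset.card_erase_of_mem (Finset.mem_univ j0), Finset.card_univ, Fintype.card_fin]
      at this
    simpa [nsmul_eq_mul] using this
  have hineq : (-mv) * Nr Γ ≤ (((c - 1 : ℕ) : ℝ) * t) * Nr Γ := by nlinarith [hsplit, hsum_le]
  have hfin : -mv ≤ ((c - 1 : ℕ) : ℝ) * t := le_of_mul_le_mul_right hineq hNpos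
  have : ((c - 1 : ℕ) : ℝ) = (c : ℝ) - 1 := by
    rw [Nat.cast_sub hc0]
    norm_num
  rwa [this] at hfin
end

/-- A quantum `c`-coloring of `G` in dimension `d`. -/
def IsQuantumColoring {n : ℕ} (G : SimpleGraph (Fin n)) (c d : ℕ)
    (P : Fin n → Fin c → Matrix (Fin d) (Fin d) ℂ) : Prop :=
  (∀ v k, (P v k)ᴴ = P v k) ∧
  (∀ v k, P v k * P v k = P v k) ∧
  (∀ v, ∑ k, P v k = 1) ∧
  (∀ v w, G.Adj v w → ∀ k, P v k * P w k = 0)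

/-- The quantum chromatic number. -/
noncomputable def quantumChromaticNumber {n : ℕ} (G : SimpleGraph (Fin n)) : ℕ :=
  sInf {c | ∃ d, 0 < d ∧ ∃ P : Fin n → Fin c → Matrix (Fin d) (Fin d) ℂ,
    IsQuantumColoring G c d P}

lemma colorings_nonempty {n : ℕ} (G : SimpleGraph (Fin n)) [DecidableRel G.Adj] :
    {c | ∃ d, 0 < d ∧ ∃ P : Fin n → Fin c → Matrix (Fin d) (Fin d) ℂ,
      IsQuantumColoring G c d P}.Nonempty := by
  classical
  refine ⟨n, 1, one_pos, fun v k => if v = k then 1 else 0, ?_, ?_, ?_, ?_⟩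
  · intro v k; by_cases h : v = k <;> simp [h]
  · intro v k; by_cases h : v = k <;> simp [h]
  · intro v; simp
  · intro v w hadj k
    by_cases h1 : v = k
    · by_cases h2 : w = k
      · exact absurd (h1.trans h2.symm) (G.ne_of_adj hadj)
      · simp [h2]
    · simp [h1]

set_option maxHeartbeats 1600000 in
/-- second bound: for a connected graph with `μ₂ > 0`, where `g` is the
multiplicity of the smallest eigenvalue `μₙ`,
`χ_q(G) ≥ 1 + min { g, |μₙ| / μ₂ }`. -/
theorem stmt10 {n : ℕ} (hn : 2 ≤ n) (G : SimpleGraph (Fin n)) [DecidableRel G.Adj]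
    (hconn : G.Connected)
    (hA : (G.adjMatrix ℝ).IsHermitian)
    (μ : Fin n → ℝ) (σ : Equiv.Perm (Fin n))
    (hμ : μ = hA.eigenvalues ∘ σ) (hμanti : Antitone μ)
    (hμ2 : 0 < μ ⟨1, by omega⟩)
    (g : ℕ)
    (hg : g = (Finset.univ.filter (fun i : Fin n => μ i = μ ⟨n - 1, by omega⟩)).card) :
    1 + min (g : ℝ) (|μ ⟨n - 1, by omega⟩| / μ ⟨1, by omega⟩)
      ≤ (quantumChromaticNumber G : ℝ) := by
  classical
  set e : Fin n → ℝ := hA.eigenvalues with he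
  set μmin : ℝ := μ ⟨n - 1, by omega⟩ with hμmin
  set μ2 : ℝ := μ ⟨1, by omega⟩ with hμ2def
  -- the coloring realizing the quantum chromatic number
  have hqmem := Nat.sInf_mem (colorings_nonempty G)
  set q : ℕ := quantumChromaticNumber G with hqdef
  obtain ⟨d, hd, P, h1, h2, h3, h4⟩ := hqmem
  -- q ≠ 0
  have hq0 : q ≠ 0 := by
    intro h0
    have hv : Fin n := ⟨0, by omega⟩
    have h30 := h3 ⟨0, by omega⟩
    have h31 : ∑ k, P ⟨0, by omega⟩ k = 0 := Finset.sum_eq_zero (fun k _ => (Fin.cast h0 k).elim0)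
    rw [h31] at h30
    have := congrArg (fun M : Matrix (Fin d) (Fin d) ℂ => M ⟨0, hd⟩ ⟨0, hd⟩) h30
    simp [Matrix.one_apply] at this
  -- μ values: every e i = μ (σ.symm i)
  have heμ : ∀ i, e i = μ (σ.symm i) := by
    intro i
    rw [hμ]
    simp
  -- μmin is the minimum value of μ
  have hμmin_le : ∀ j : Fin n, μmin ≤ μ j := by
    intro j
    exact hμanti (by rw [Fin.le_def]; simp; omega)
  -- μmin ≤ 0 via the trace
  have hμmin_le0 : μmin ≤ 0 := by
    have htr : ∑ i, e i = 0 := by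
      have hsp := hA.spectral_theorem
      have hVu : (star (hA.eigenvectorUnitary : Matrix (Fin n) (Fin n) ℝ))
          * (hA.eigenvectorUnitary : Matrix (Fin n) (Fin n) ℝ) = 1 :=
        Matrix.mem_unitaryGroup_iff'.mp hA.eigenvectorUnitary.2
      have : Matrix.trace (G.adjMatrix ℝ)
          = Matrix.trace (Matrix.diagonal (RCLike.ofReal ∘ hA.eigenvalues)) := by
        conv_lhs => rw [hsp]
        rw [Unitary.conjStarAlgAut_apply, Matrix.trace_mul_comm, ← Matrix.mul_assoc, hVu, Matrix.one_mul]
      rw [SimpleGraph.trace_adjMatrix] at this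
      rw [Matrix.trace_diagonal] at this
      simpa [RCLike.ofReal_real_eq_id] using this.symm
    have hlow : ∑ i, e i ≥ (n : ℝ) * μmin := by
      calc ∑ i, e i ≥ ∑ _i : Fin n, μmin :=
            Finset.sum_le_sum fun i _ => by rw [heμ i]; exact hμmin_le _
        _ = (n : ℝ) * μmin := by rw [Finset.sum_const, Finset.card_univ, Fintype.card_fin,
            nsmul_eq_mul]
    by_contra hpos
    push_neg at hpos
    have hn2 : (2:ℝ) ≤ (n:ℝ) := by exact_mod_cast hn
    nlinarith [mul_le_mul_of_nonneg_right hn2 (le_of_lt hpos)]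
  -- cardinality of the eigenvalue-indexed multiplicity set
  set Sg : Finset (Fin n) := Finset.univ.filter (fun i => e i = μmin) with hSgdef
  have hgcard : g = Sg.card := by
    rw [hg, hSgdef]
    refine Finset.card_bij (fun i _ => σ i) ?_ ?_ ?_
    · intro a ha
      rw [Finset.mem_filter] at ha ⊢
      refine ⟨Finset.mem_univ _, ?_⟩
      rw [heμ]
      simpa using ha.2
    · intro a _ b _ hab
      exact σ.injective hab
    · intro b hb
      rw [Finset.mem_filter] at hb
      refine ⟨σ.symm b, ?_, by simp⟩
      rw [Finset.mem_filter]
      refine ⟨Finset.mem_univ _, ?_⟩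
      rw [← heμ]
      exact hb.2
  -- now split on whether g < q
  rcases lt_or_ge g q with hgq | hqg
  · -- easy case : min ≤ g ≤ q - 1
    have h5 : (g : ℝ) + 1 ≤ (q : ℝ) := by exact_mod_cast hgq
    have h6 : min (g : ℝ) (|μmin| / μ2) ≤ (g : ℝ) := min_le_left _ _
    linarith
  · -- hard case: apply the core bound
    -- complexified data
    set Ac : Matrix (Fin n) (Fin n) ℂ := (G.adjMatrix ℝ).map Complex.ofRealHom with hAcdef
    set U : Matrix (Fin n) (Fin n) ℝ := (hA.eigenvectorUnitary : Matrix (Fin n) (Fin n) ℝ)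
      with hUdef
    set Uc : Matrix (Fin n) (Fin n) ℂ := Uᵀ.map Complex.ofRealHom with hUcdef
    have hstarU : star U = Uᵀ := by
      ext i j
      simp [Matrix.star_apply]
    have hU1 : U * Uᵀ = 1 := by
      have := Matrix.mem_unitaryGroup_iff.mp hA.eigenvectorUnitary.2
      rwa [hstarU] at this
    have hU2 : Uᵀ * U = 1 := by
      have := Matrix.mem_unitaryGroup_iff'.mp hA.eigenvectorUnitary.2
      rwa [hstarU] at this
    have hUcH : Ucᴴ = U.map Complex.ofRealHom := by
      ext i j
      simp [hUcdef, Matrix.conjTranspose_apply, Matrix.map_apply, Matrix.transpose_apply,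
        Complex.conj_ofReal]
    have hUc1 : Uc * Ucᴴ = 1 := by
      rw [hUcdef, hUcH, ← Matrix.map_mul, hU2, Matrix.map_one _ (map_zero _) (map_one _)]
    have hUc2 : Ucᴴ * Uc = 1 := by
      rw [hUcdef, hUcH, ← Matrix.map_mul, hU1, Matrix.map_one _ (map_zero _) (map_one _)]
    have hAdec : Ac = Ucᴴ * Matrix.diagonal (fun i => (e i : ℂ)) * Uc := by
      have hsp := hA.spectral_theorem
      rw [Unitary.conjStarAlgAut_apply, ← hUdef, hstarU, ← he] at hsp
      have hdm : (Matrix.diagonal (RCLike.ofReal ∘ e)).map Complex.ofRealHom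
          = Matrix.diagonal (fun i => ((e i : ℝ) : ℂ)) := by
        rw [Matrix.diagonal_map (map_zero _)]
        congr 1
      rw [hAcdef, hUcH, hUcdef]
      conv_lhs => rw [hsp]
      rw [Matrix.map_mul, Matrix.map_mul, hdm]
    have hAc4 : ∀ v w, Ac v w ≠ 0 → ∑ k, P v k * P w k = 0 := by
      intro v w hvw
      have hadj : G.Adj v w := by
        by_contra hno
        apply hvw
        simp [hAcdef, Matrix.map_apply, SimpleGraph.adjMatrix_apply, hno]
      exact Finset.sum_eq_zero fun k _ => h4 v w hadj k
    -- spectral ordering hypotheses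
    set i0 : Fin n := σ ⟨0, by omega⟩ with hi0
    have ht : ∀ i, i ≠ i0 → e i ≤ μ2 := by
      intro i hi
      rw [heμ i, hμ2def]
      refine hμanti ?_
      have hσ : σ.symm i ≠ ⟨0, by omega⟩ := by
        intro hcon
        apply hi
        rw [hi0, ← hcon]
        simp
      have hne0 : (σ.symm i).val ≠ 0 := by
        intro hv
        exact hσ (Fin.ext hv)
      rw [Fin.le_def]
      have hval : ((⟨1, by omega⟩ : Fin n)).val = 1 := rfl
      omega
    have hSg : ∀ i ∈ Sg, e i = μmin := by
      intro i hi
      rw [hSgdef, Finset.mem_filter] at hi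
      exact hi.2
    have hcore := core hq0 hd P h1 h2 h3 Ac hAc4 Uc hUc1 hUc2 e hAdec i0 μ2 μmin ht Sg hSg
      (by omega)
    -- conclude
    have habs : |μmin| = -μmin := abs_of_nonpos hμmin_le0
    have hratio : |μmin| / μ2 ≤ (q : ℝ) - 1 := by
      rw [div_le_iff₀ hμ2, habs]
      exact hcore
    have h6 : min (g : ℝ) (|μmin| / μ2) ≤ |μmin| / μ2 := min_le_right _ _
    linarith
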